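/- Let η be a positive equivalence relation. If ℕ is the only η-infinite r.e. set, then ℕ is not contained in any behaviourally correctly learnable η-family. -/

import Mathlib

namespace PEL

/-- Evaluation of the `e`-th partial recursive function (via the standard
numbering of `Nat.Partrec.Code`). -/
def evalCode (e : ℕ) (x : ℕ) : Part ℕ :=
  (Denumerable.ofNat Nat.Partrec.Code e).eval x

/-- The `e`-th recursively enumerable set `W_e = dom φ_e`. -/
def W (e : ℕ) : Set ℕ := {x | (evalCode e x).Dom}

/-- A set is r.e. iff it equals some `W_e`. -/
def RESet (S : Set ℕ) : Prop := ∃ e, W e = S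

/-- A positive equivalence relation: an r.e. equivalence relation on ℕ
with infinitely many equivalence classes. -/
structure PosEq where
  rel : ℕ → ℕ → Prop
  equiv : Equivalence rel
  re : ∃ e, ∀ x y, rel x y ↔ Nat.pair x y ∈ W e
  classes_infinite : (Set.range fun x => {y | rel x y}).Infinite

/-- The η-equivalence class of `x`. -/
def classOf (η : PosEq) (x : ℕ) : Set ℕ := {y | η.rel x y}

/-- A set is η-closed iff it is a union of η-equivalence classes. -/
def EtaClosed (η : PosEq) (S : Set ℕ) : Prop := ∀ x ∈ S, classOf η x ⊆ S

/-- A set is η-finite iff it is a union of finitely many η-equivalence classes. -/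
def EtaFinite (η : PosEq) (S : Set ℕ) : Prop :=
  EtaClosed η S ∧ (classOf η '' S).Finite

/-- A set is η-infinite iff it is a union of infinitely many η-equivalence classes. -/
def EtaInfinite (η : PosEq) (S : Set ℕ) : Prop :=
  EtaClosed η S ∧ (classOf η '' S).Infinite

/-- `f` is a one-one uniformly r.e. numbering of the class `C`:
`f` is computable, `i ↦ W_{f i}` is injective, and `C = {W_{f i} : i ∈ ℕ}`. -/
def OneOneNumbering (f : ℕ → ℕ) (C : Set (Set ℕ)) : Prop :=
  Computable f ∧ (∀ i j, W (f i) = W (f j) → i = j) ∧ C = Set.range fun i => W (f i)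

/-- An η-family: an (automatically infinite) class of η-closed r.e. sets
admitting a one-one uniformly r.e. numbering. -/
def EtaFamily (η : PosEq) (C : Set (Set ℕ)) : Prop :=
  (∀ L ∈ C, EtaClosed η L) ∧ ∃ f, OneOneNumbering f C

/-- `a η n` is the `n`-th (in ascending order) least representative of an
η-equivalence class. -/
noncomputable def a (η : PosEq) (n : ℕ) : ℕ := Nat.nth (fun x => ∀ y, η.rel x y → x ≤ y) n

/-- `A η n = [a_0] ∪ … ∪ [a_{n-1}]`. -/
def A (η : PosEq) (n : ℕ) : Set ℕ := {x | ∃ m < n, η.rel (a η m) x}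

/-- The ascending family `𝒜_η = {A_n : n ∈ ℕ}`. -/
def ascendingFamily (η : PosEq) : Set (Set ℕ) := Set.range (A η)

/-- A learner: a map from finite sequences over ℕ ∪ {#} (with `none` as the
pause symbol `#`) to hypotheses in ℕ ∪ {?} (with `none` as `?`). -/
abbrev Learner := List (Option ℕ) → Option ℕ

/-- The content of a text. -/
def cntT (T : ℕ → Option ℕ) : Set ℕ := {x | ∃ n, T n = some x}

/-- `T` is a text for `L`. -/
def IsText (T : ℕ → Option ℕ) (L : Set ℕ) : Prop := cntT T = L

/-- The initial segment `T[n] = T(0), …, T(n-1)`. -/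
def seg (T : ℕ → Option ℕ) (n : ℕ) : List (Option ℕ) := (List.range n).map T

/-- The content of a finite sequence. -/
def cntL (σ : List (Option ℕ)) : Set ℕ := {x | some x ∈ σ}

/-- Explanatory learning with hypotheses interpreted in hypothesis space `H`. -/
def ExLearnsIn (H : ℕ → Set ℕ) (M : Learner) (C : Set (Set ℕ)) : Prop :=
  ∀ L ∈ C, ∀ T, IsText T L →
    ∃ n e, M (seg T n) = some e ∧ H e = L ∧ ∀ j, n ≤ j → M (seg T j) = M (seg T n)

/-- Behaviourally correct learning with hypothesis space `H`. -/
def BCLearnsIn (H : ℕ → Set ℕ) (M : Learner) (C : Set (Set ℕ)) : Prop :=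
  ∀ L ∈ C, ∀ T, IsText T L →
    ∃ n, ∀ j, n ≤ j → ∃ e, M (seg T j) = some e ∧ H e = L

/-- Finite (one-shot) learning with hypothesis space `H`. -/
def FinLearnsIn (H : ℕ → Set ℕ) (M : Learner) (C : Set (Set ℕ)) : Prop :=
  ∀ L ∈ C, ∀ T, IsText T L →
    ∃ n e, M (seg T n) = some e ∧ H e = L ∧ (∀ m, m < n → M (seg T m) = none) ∧
      ∀ j, n ≤ j → M (seg T j) = M (seg T n)

/-- The sequence of hypotheses of `M` on text `T` converges. -/
def ConvergesOn (M : Learner) (T : ℕ → Option ℕ) : Prop :=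
  ∃ n, ∀ j, n ≤ j → M (seg T j) = M (seg T n)

/-- Confident learning with hypothesis space `H`: explanatory learning with
convergence on every text for every subset of ℕ. -/
def ConfLearnsIn (H : ℕ → Set ℕ) (M : Learner) (C : Set (Set ℕ)) : Prop :=
  ExLearnsIn H M C ∧ ∀ T, ConvergesOn M T

/-- Vacillatory learning with hypothesis space `H`. -/
def VacLearnsIn (H : ℕ → Set ℕ) (M : Learner) (C : Set (Set ℕ)) : Prop :=
  BCLearnsIn H M C ∧
    ∀ L ∈ C, ∀ T, IsText T L → {h : Option ℕ | ∃ n, 1 ≤ n ∧ M (seg T n) = h}.Finite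

/-- Weakly confident learning with hypothesis space `H`: explanatory learning
with convergence on every text consistent with the class. -/
def WConfLearnsIn (H : ℕ → Set ℕ) (M : Learner) (C : Set (Set ℕ)) : Prop :=
  ExLearnsIn H M C ∧ ∀ T, (∃ L ∈ C, cntT T ⊆ L) → ConvergesOn M T

def ExLearnable (C : Set (Set ℕ)) : Prop :=
  ∃ M : Learner, Computable M ∧ ExLearnsIn W M C

def BCLearnable (C : Set (Set ℕ)) : Prop :=
  ∃ M : Learner, Computable M ∧ BCLearnsIn W M C

def FinLearnable (C : Set (Set ℕ)) : Prop :=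
  ∃ M : Learner, Computable M ∧ FinLearnsIn W M C

def ConfLearnable (C : Set (Set ℕ)) : Prop :=
  ∃ M : Learner, Computable M ∧ ConfLearnsIn W M C

def VacLearnable (C : Set (Set ℕ)) : Prop :=
  ∃ M : Learner, Computable M ∧ VacLearnsIn W M C

def WConfLearnable (C : Set (Set ℕ)) : Prop :=
  ∃ M : Learner, Computable M ∧ WConfLearnsIn W M C

/-!
A BC-learner of a class containing `ℕ` has a finite tell-tale `D` for `ℕ`: no other member of
the class contains `D`, for otherwise one splices together a text for `ℕ` on which the learner
conjectures a wrong set infinitely often. On the other hand, if `ℕ` is the only η-infinite r.e.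
set, every finite `S` lies in infinitely many members `W (f i)` of the family. Indeed, if this
holds for `S` but fails for `insert x S`, then beyond some index `N` the members containing `S`
omit `x`; but their union is r.e., η-closed, and η-infinite since it contains infinitely many
distinct η-closed sets, so it is `ℕ` and contains `x`. Taking `S = D` is contradictory.
-/

open Nat.Partrec (Code)

def haltsWithin (e s z : ℕ) : Bool :=
  (Code.evaln s (Denumerable.ofNat Code e) z).isSome

theorem Computable.haltsWithin {α : Type*} [Primcodable α] {e s z : α → ℕ} (he : Computable e)
    (hs : Computable s) (hz : Computable z) : Computable fun a => haltsWithin (e a) (s a) (z a) :=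
  Primrec.option_isSome.to_comp.comp <| Code.primrec_evaln.to_comp.comp <|
    (hs.pair ((Primrec.ofNat Code).to_comp.comp he)).pair hz

theorem haltsWithin_mono {e s t z : ℕ} (hst : s ≤ t) (h : haltsWithin e s z) :
    haltsWithin e t z := by
  obtain ⟨v, hv⟩ := Option.isSome_iff_exists.1 h
  exact Option.isSome_iff_exists.2 ⟨v, Code.evaln_mono hst hv⟩

theorem mem_W_iff_exists_haltsWithin {e z : ℕ} : z ∈ W e ↔ ∃ s, haltsWithin e s z := by
  simp only [W, evalCode, Set.mem_ofPred_eq, Part.dom_iff_mem, haltsWithin,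
    Option.isSome_iff_exists, Code.evaln_complete]
  exact ⟨fun ⟨v, s, hv⟩ => ⟨s, v, hv⟩, fun ⟨s, v, hv⟩ => ⟨v, s, hv⟩⟩

theorem forall_mem_W_iff_exists_haltsWithin {e : ℕ} (l : List ℕ) :
    (∀ z ∈ l, z ∈ W e) ↔ ∃ s, ∀ z ∈ l, haltsWithin e s z := by
  induction l with
  | nil => simp
  | cons a l ih =>
    simp only [List.forall_mem_cons]
    rw [ih, mem_W_iff_exists_haltsWithin]
    constructor
    · rintro ⟨⟨s, hs⟩, t, ht⟩
      exact ⟨max s t, haltsWithin_mono (le_max_left s t) hs,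
        fun z hz => haltsWithin_mono (le_max_right s t) (ht z hz)⟩
    · rintro ⟨s, hs, hl⟩
      exact ⟨⟨s, hs⟩, s, hl⟩

theorem computable_list_all {α β : Type*} [Primcodable α] [Primcodable β] {p : α → β → Bool}
    (hp : Computable₂ p) (l : List β) : Computable fun a => l.all (p a) := by
  induction l with
  | nil => exact Computable.const true
  | cons b l ih =>
    exact (Primrec.and.to_comp.comp (hp.comp Computable.id (Computable.const b)) ih).of_eq
      fun a => (List.all_cons).symm

theorem reSet_setOf_exists (R : ℕ → ℕ → Bool) (hR : Computable₂ R) :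
    RESet {y | ∃ n, R y n} := by
  obtain ⟨c, hc⟩ := Code.exists_code.1 (Partrec.nat_iff.1 (Partrec.rfind hR.partrec₂))
  refine ⟨Encodable.encode c, Set.ext fun y => ?_⟩
  change (Code.eval (Denumerable.ofNat Code (Encodable.encode c)) y).Dom ↔ _
  rw [Denumerable.ofNat_encode, hc]
  simp only [Nat.rfind_dom, PFun.coe_val, Part.mem_some_iff, Part.some_dom, implies_true,
    and_true, Set.mem_ofPred_eq]
  exact exists_congr fun n => eq_comm

theorem reSet_setOf_exists_mem_W {f : ℕ → ℕ} (hf : Computable f) (N : ℕ) (S : Finset ℕ) :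
    RESet {y | ∃ i, N < i ∧ ↑S ⊆ W (f i) ∧ y ∈ W (f i)} := by
  let R : ℕ → ℕ → Bool := fun y n =>
    (decide (N < n.unpair.1) && haltsWithin (f n.unpair.1) n.unpair.2 y) &&
      S.toList.all (haltsWithin (f n.unpair.1) n.unpair.2)
  have hi : Computable fun p : ℕ × ℕ => p.2.unpair.1 :=
    Computable.fst.comp (Computable.unpair.comp Computable.snd)
  have hs : Computable fun p : ℕ × ℕ => p.2.unpair.2 :=
    Computable.snd.comp (Computable.unpair.comp Computable.snd)
  have hlt : Computable fun p : ℕ × ℕ => decide (N < p.2.unpair.1) :=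
    (Primrec.nat_lt.decide.to_comp).comp (Computable.const N) hi
  have hall : Computable fun p : ℕ × ℕ =>
      S.toList.all (haltsWithin (f p.2.unpair.1) p.2.unpair.2) :=
    computable_list_all
      (p := fun (q : ℕ × ℕ) (z : ℕ) => haltsWithin (f q.2.unpair.1) q.2.unpair.2 z)
      (Computable.haltsWithin (hf.comp (hi.comp Computable.fst)) (hs.comp Computable.fst)
        Computable.snd) _
  have hR : Computable₂ R := Primrec.and.to_comp.comp (Primrec.and.to_comp.comp hlt
    (Computable.haltsWithin (hf.comp hi) hs Computable.fst)) hall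
  have hmem : ∀ y i, (↑S ⊆ W (f i) ∧ y ∈ W (f i)) ↔
      ∃ s, ∀ z ∈ y :: S.toList, haltsWithin (f i) s z := by
    intro y i
    rw [← forall_mem_W_iff_exists_haltsWithin]
    simp [Set.subset_def, and_comm]
  have hU : {y | ∃ i, N < i ∧ ↑S ⊆ W (f i) ∧ y ∈ W (f i)} = {y | ∃ n, R y n} := by
    ext y
    simp only [Set.mem_ofPred_eq, hmem, R, Bool.and_eq_true, decide_eq_true_eq, List.all_eq_true,
      List.forall_mem_cons]
    constructor
    · rintro ⟨i, hNi, s, hy, hS⟩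
      exact ⟨Nat.pair i s, by rw [Nat.unpair_pair]; exact ⟨⟨hNi, hy⟩, hS⟩⟩
    · rintro ⟨n, ⟨hNi, hy⟩, hS⟩
      exact ⟨n.unpair.1, hNi, n.unpair.2, hy, hS⟩
  exact hU ▸ reSet_setOf_exists R hR

theorem cntL_append (σ τ : List (Option ℕ)) : cntL (σ ++ τ) = cntL σ ∪ cntL τ := by
  ext x
  simp [cntL]

theorem cntL_seg_subset_cntT (T : ℕ → Option ℕ) (n : ℕ) : cntL (seg T n) ⊆ cntT T := by
  intro x hx
  obtain ⟨k, -, hk⟩ := List.mem_map.1 hx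
  exact ⟨k, hk⟩

theorem coe_toFinset_reduceOption (σ : List (Option ℕ)) :
    (↑σ.reduceOption.toFinset : Set ℕ) = cntL σ := by
  ext x
  simp [cntL, List.reduceOption_mem_iff]

theorem exists_isText (L : Set ℕ) : ∃ T, IsText T L := by
  classical
  refine ⟨fun x => if x ∈ L then some x else none, Set.ext fun x => ?_⟩
  simp [cntT]

def prependText (σ : List (Option ℕ)) (T : ℕ → Option ℕ) (k : ℕ) : Option ℕ :=
  if h : k < σ.length then σ[k] else T (k - σ.length)

theorem seg_prependText (σ : List (Option ℕ)) (T : ℕ → Option ℕ) (n : ℕ) :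
    seg (prependText σ T) (σ.length + n) = σ ++ seg T n := by
  rw [seg, List.range_add, List.map_append]
  congr 1
  · refine List.ext_getElem (by simp) fun k hk _ => ?_
    simp only [List.length_map, List.length_range] at hk
    simp [prependText, hk]
  · simp [seg, prependText, Function.comp_def]

theorem cntT_prependText (σ : List (Option ℕ)) (T : ℕ → Option ℕ) :
    cntT (prependText σ T) = cntL σ ∪ cntT T := by
  ext x
  constructor
  · rintro ⟨k, hk⟩
    unfold prependText at hk
    split_ifs at hk with h
    · exact Or.inl (show some x ∈ σ by rw [← hk]; exact List.getElem_mem h)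
    · exact Or.inr ⟨_, hk⟩
  · rintro (hx | ⟨k, hk⟩)
    · obtain ⟨k, h, hk⟩ := List.getElem_of_mem hx
      exact ⟨k, by simp [prependText, h, hk]⟩
    · exact ⟨σ.length + k, by simp [prependText, hk]⟩

theorem exists_seg_eq_of_isPrefix (c : ℕ → List (Option ℕ)) (hc : ∀ n, c n <+: c (n + 1))
    (hlen : ∀ n, n ≤ (c n).length) :
    ∃ T, (∀ n, seg T (c n).length = c n) ∧ cntT T = ⋃ n, cntL (c n) := by
  have hmono : ∀ m n, m ≤ n → c m <+: c n := fun m n hmn => by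
    induction n, hmn using Nat.le_induction with
    | base => exact List.prefix_refl _
    | succ n _ ih => exact ih.trans (hc n)
  let T : ℕ → Option ℕ := fun k => (c (k + 1)).getD k none
  have hT : ∀ k, T k = (c (k + 1))[k]'(hlen (k + 1)) := fun k =>
    List.getD_eq_getElem _ _ (hlen (k + 1))
  have hseg : ∀ n, seg T (c n).length = c n := fun n => by
    refine List.ext_getElem (by simp [seg]) fun k _ hk => ?_
    simp only [seg, List.getElem_map, List.getElem_range, hT]
    rcases le_total (k + 1) n with h | h
    · exact (hmono _ _ h).getElem _
    · exact ((hmono _ _ h).getElem hk).symm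
  refine ⟨T, hseg, Set.ext fun x => ⟨fun ⟨k, hk⟩ => ?_, fun hx => ?_⟩⟩
  · rw [hT] at hk
    exact Set.mem_iUnion.2 ⟨k + 1, show some x ∈ c (k + 1) from hk ▸ List.getElem_mem _⟩
  · obtain ⟨n, hn⟩ := Set.mem_iUnion.1 hx
    rw [← hseg n] at hn
    exact cntL_seg_subset_cntT T _ hn

section Learning

variable {H : ℕ → Set ℕ} {M : Learner} {C : Set (Set ℕ)}

theorem BCLearnsIn.exists_extension (hM : BCLearnsIn H M C) {L : Set ℕ} (hL : L ∈ C)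
    {σ : List (Option ℕ)} (hσ : cntL σ ⊆ L) :
    ∃ τ e, cntL τ ⊆ L ∧ M (σ ++ τ) = some e ∧ H e = L := by
  obtain ⟨T, hT⟩ := exists_isText L
  have hText : IsText (prependText σ T) L := by
    rw [IsText, cntT_prependText, hT, Set.union_eq_right.2 hσ]
  obtain ⟨n, hn⟩ := hM L hL _ hText
  obtain ⟨e, he, hHe⟩ := hn (σ.length + n) (Nat.le_add_left n _)
  rw [seg_prependText] at he
  exact ⟨seg T n, e, hT ▸ cntL_seg_subset_cntT T n, he, hHe⟩

theorem BCLearnsIn.exists_extension_ne (hM : BCLearnsIn H M C) {L : Set ℕ}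
    (hno : ∀ D : Finset ℕ, ↑D ⊆ L → ∃ L' ∈ C, ↑D ⊆ L' ∧ L' ⊆ L ∧ L' ≠ L)
    {σ : List (Option ℕ)} (hσ : cntL σ ⊆ L) :
    ∃ τ e, cntL τ ⊆ L ∧ M (σ ++ τ) = some e ∧ H e ≠ L := by
  obtain ⟨L', hL'C, hσL', hL'L, hne⟩ :=
    hno σ.reduceOption.toFinset (by rwa [coe_toFinset_reduceOption])
  rw [coe_toFinset_reduceOption] at hσL'
  obtain ⟨τ, e, hτ, hMe, rfl⟩ := hM.exists_extension hL'C hσL'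
  exact ⟨τ, e, hτ.trans hL'L, hMe, hne⟩

theorem BCLearnsIn.exists_tellTale (hM : BCLearnsIn H M C) {L : Set ℕ} (hL : L ∈ C) :
    ∃ D : Finset ℕ, ↑D ⊆ L ∧ ∀ L' ∈ C, ↑D ⊆ L' → L' ⊆ L → L' = L := by
  by_contra! hno
  obtain ⟨T₀, hT₀⟩ := exists_isText L
  have hT₀L : ∀ n, cntL [T₀ n] ⊆ L := fun n x hx => hT₀ ▸ ⟨n, (List.mem_singleton.1 hx).symm⟩
  have step : ∀ σ, cntL σ ⊆ L → ∀ n, ∃ τ e,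
      cntL τ ⊆ L ∧ M (σ ++ [T₀ n] ++ τ) = some e ∧ H e ≠ L := fun σ hσ n =>
    hM.exists_extension_ne hno (by rw [cntL_append]; exact Set.union_subset hσ (hT₀L n))
  choose! τ e hτL hMe hHe using step
  -- a text for `L` on which `M` conjectures a wrong language infinitely often
  let c : ℕ → List (Option ℕ) := fun n => Nat.rec [] (fun n σ => σ ++ [T₀ n] ++ τ σ n) n
  have hcL : ∀ n, cntL (c n) ⊆ L := fun n => by
    induction n with
    | zero => simp [c, cntL]
    | succ n ih =>
      change cntL (c n ++ [T₀ n] ++ τ (c n) n) ⊆ L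
      simp only [cntL_append]
      exact Set.union_subset (Set.union_subset ih (hT₀L n)) (hτL _ ih n)
  have hlen : ∀ n, n ≤ (c n).length := fun n => by
    induction n with
    | zero => simp
    | succ n ih =>
      change n + 1 ≤ (c n ++ [T₀ n] ++ τ (c n) n).length
      simp only [List.length_append, List.length_singleton]
      omega
  obtain ⟨T, hseg, hcnt⟩ := exists_seg_eq_of_isPrefix c
    (fun n => (List.prefix_append _ _).trans (List.prefix_append _ _)) hlen
  have hText : IsText T L := by
    refine hcnt.trans (Set.Subset.antisymm (Set.iUnion_subset hcL) fun x hx => ?_)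
    obtain ⟨n, hn⟩ := hT₀.symm ▸ hx
    exact Set.mem_iUnion.2 ⟨n + 1, show some x ∈ c n ++ [T₀ n] ++ τ (c n) n by simp [hn]⟩
  obtain ⟨n, hn⟩ := hM L hL T hText
  obtain ⟨e', he', hHe'⟩ := hn (c (n + 1)).length ((Nat.le_succ n).trans (hlen (n + 1)))
  rw [hseg (n + 1)] at he'
  exact hHe _ (hcL n) n (Option.some.inj (he'.symm.trans (hMe _ (hcL n) n)) ▸ hHe')

end Learning

section PositiveEquivalence

variable {η : PosEq}

theorem EtaClosed.sUnion_image_classOf {L : Set ℕ} (hL : EtaClosed η L) :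
    ⋃₀ (classOf η '' L) = L :=
  Set.Subset.antisymm (Set.sUnion_subset (Set.forall_mem_image.2 hL))
    fun x hx => Set.mem_sUnion.2 ⟨classOf η x, Set.mem_image_of_mem _ hx, η.equiv.refl x⟩

theorem infinite_image_classOf_of_infinite_subsets {U : Set ℕ} {F : Set (Set ℕ)}
    (hF : F.Infinite) (hcl : ∀ L ∈ F, EtaClosed η L) (hU : ∀ L ∈ F, L ⊆ U) :
    (classOf η '' U).Infinite := fun hfin => by
  have hinj : Set.InjOn (classOf η '' ·) F := fun L hL L' hL' h => by
    rw [← (hcl L hL).sUnion_image_classOf, ← (hcl L' hL').sUnion_image_classOf]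
    exact congrArg _ h
  refine hF (Set.Finite.of_finite_image (hfin.finite_subsets.subset ?_) hinj)
  rintro _ ⟨L, hL, rfl⟩
  exact Set.image_mono (hU L hL)

theorem infinite_setOf_insert_subset_W
    (h : ∀ S : Set ℕ, RESet S → EtaInfinite η S → S = Set.univ) {f : ℕ → ℕ} (hf : Computable f)
    (hinj : ∀ i j, W (f i) = W (f j) → i = j)
    (hcl : ∀ i, EtaClosed η (W (f i))) {S : Finset ℕ} (hS : {i | ↑S ⊆ W (f i)}.Infinite)
    (x : ℕ) : {i | ↑(insert x S) ⊆ W (f i)}.Infinite := fun hfin => by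
  obtain ⟨N, hN⟩ := hfin.bddAbove
  let U := {y | ∃ i, N < i ∧ ↑S ⊆ W (f i) ∧ y ∈ W (f i)}
  have hUcl : EtaClosed η U := fun y ⟨i, hNi, hSi, hyi⟩ z hz => ⟨i, hNi, hSi, hcl i y hyi hz⟩
  have hUinf : (classOf η '' U).Infinite := by
    refine infinite_image_classOf_of_infinite_subsets
      (F := (W ∘ f) '' {i | N < i ∧ ↑S ⊆ W (f i)}) ?_ (Set.forall_mem_image.2 fun i _ => hcl i)
      (Set.forall_mem_image.2 fun i ⟨hNi, hSi⟩ y hy => ⟨i, hNi, hSi, hy⟩)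
    refine Set.Infinite.image (fun i _ j _ hij => hinj i j hij) ?_
    exact (hS.sdiff (Set.finite_le_nat N)).mono fun i hi => ⟨not_le.1 hi.2, hi.1⟩
  have hU : U = Set.univ := h U (reSet_setOf_exists_mem_W hf N S) ⟨hUcl, hUinf⟩
  obtain ⟨i, hNi, hSi, hxi⟩ : x ∈ U := hU ▸ Set.mem_univ x
  have hi : i ∈ {i | ↑(insert x S) ⊆ W (f i)} := by
    rw [Set.mem_ofPred_eq, Finset.coe_insert]
    exact Set.insert_subset hxi hSi
  exact absurd (hN hi) (not_le.2 hNi)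

end PositiveEquivalence

/-- If ℕ is the only η-infinite r.e. set, then ℕ is not contained
in any behaviourally correctly learnable η-family. -/
theorem stmt6 (η : PosEq)
    (h : ∀ S : Set ℕ, RESet S → EtaInfinite η S → S = Set.univ) :
    ∀ C : Set (Set ℕ), EtaFamily η C → BCLearnable C → Set.univ ∉ C := by
  rintro C ⟨hcl, f, hf, hinj, rfl⟩ ⟨M, -, hM⟩ huniv
  obtain ⟨D, -, hD⟩ := hM.exists_tellTale huniv
  obtain ⟨i₀, hi₀⟩ := huniv
  have hinf : ∀ S : Finset ℕ, {i | ↑S ⊆ W (f i)}.Infinite := by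
    intro S
    induction S using Finset.induction_on with
    | empty => simpa using Set.infinite_univ
    | insert x S _ ih =>
      exact infinite_setOf_insert_subset_W h hf hinj (fun i => hcl _ ⟨i, rfl⟩) ih x
  refine hinf D ((Set.finite_singleton i₀).subset fun i hi => ?_)
  exact hinj i i₀ ((hD _ ⟨i, rfl⟩ hi (Set.subset_univ _)).trans hi₀.symm)

end PEL
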